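/- arXiv:2112.09181 — 4 statements merged into one kernel-verified Lean document; each statement's English description precedes it below -/
import Mathlib

section
/- For all natural numbers n ≥ 1, 0 ≤ k ≤ n, and all real x, the identity x(1-x)·(n+1)·(p_{n,k}(x) - p_{n,k+1}(x)) = ((k+1) - (n+1)x)·p_{n+1,k+1}(x) holds, where p_{n,n+1} := 0. -/
/-- The Bernstein polynomial `p_{n,k}(x) = C(n,k) x^k (1-x)^{n-k}`.
Note that for `k > n` the binomial coefficient vanishes, so `bern n k = 0`,
matching the convention `p_{n,n+1} := 0`. -/
noncomputable def bern (n k : ℕ) (x : ℝ) : ℝ :=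
  (n.choose k : ℝ) * x ^ k * (1 - x) ^ (n - k)

theorem bernstein_difference_identity (n k : ℕ) (hn : 1 ≤ n) (hk : k ≤ n) (x : ℝ) :
    x * (1 - x) * (n + 1) * (bern n k x - bern n (k + 1) x)
      = ((k + 1 : ℝ) - (n + 1) * x) * bern (n + 1) (k + 1) x := by
  rcases Nat.lt_or_ge k n with h | h
  · obtain ⟨m, rfl⟩ : ∃ m, n = k + 1 + m := ⟨n - (k + 1), by omega⟩
    have h1 : (((k + 1 + m) + 1).choose (k + 1) : ℝ)
        = ((k + 1 + m).choose k : ℝ) + ((k + 1 + m).choose (k + 1) : ℝ) := by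
      exact_mod_cast Nat.choose_succ_succ (k + 1 + m) k
    have h2 : ((k + 1 + m + 1) : ℝ) * ((k + 1 + m).choose k : ℝ)
        = (((k + 1 + m) + 1).choose (k + 1) : ℝ) * (k + 1 : ℝ) := by
      have := Nat.add_one_mul_choose_eq (k + 1 + m) k
      exact_mod_cast congrArg (Nat.cast : ℕ → ℝ) this
    simp only [bern]
    have e1 : k + 1 + m - k = m + 1 := by omega
    have e2 : k + 1 + m - (k + 1) = m := by omega
    have e3 : k + 1 + m + 1 - (k + 1) = m + 1 := by omega
    rw [e1, e2, e3, h1]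
    have hC := h2
    push_cast at hC ⊢
    linear_combination (x ^ (k + 1) * (1 - x) ^ (m + 1)) * hC
      + ((k : ℝ) + 1) * x ^ (k + 1) * (1 - x) ^ (m + 1) * h1
  · have hk' : k = n := le_antisymm hk h
    subst hk'
    simp only [bern, Nat.choose_self, Nat.choose_succ_self, Nat.sub_self]
    push_cast
    ring
end

section
/- Let f : [0,1]^d → ℝ be Lipschitz continuous with constant L (with respect to the Euclidean norm). Then for every n ≥ 1 and every x ∈ [0,1]^d, the multivariate Bernstein polynomial B_n(f)(x) = ∑_{0 ≤ k ≤ n} f(k/n) ∏_{j=1}^d p_{n,k_j}(x_j) satisfies |f(x) - B_n(f)(x)| ≤ (L/2)·√(d/n). -/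
/-! For fixed `x`, the weights `w_k(x) = ∏_j p_{n,k_j}(x_j)` form a product of binomial
distributions on the grid `{0,…,n}^d`, so the coordinate `k_j/n` has mean `x_j` and variance
`x_j(1-x_j)/n ≤ 1/(4n)`. As `B_n(f)(x)` is the `w(x)`-average of `f(k/n)`, the Lipschitz bound
and Jensen's inequality for the concave square root give
`|f(x) - B_n(f)(x)| ≤ L · E‖x - k/n‖ ≤ L · √(E‖x - k/n‖²) ≤ L · √(d/(4n))`. -/

open Finset

/-- The multivariate Bernstein polynomial of a function `f : [0,1]^d → ℝ`:
`B_n(f)(x) = ∑_{0 ≤ k ≤ n} f(k/n) ∏_j p_{n,k_j}(x_j)`. -/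
noncomputable def bernOp (d n : ℕ) (f : (Fin d → ℝ) → ℝ) (x : Fin d → ℝ) : ℝ :=
  ∑ k : Fin d → Fin (n + 1),
    f (fun j => ((k j : ℕ) : ℝ) / n) * ∏ j, bern n (k j) (x j)

lemma bern_nonneg {n k : ℕ} {x : ℝ} (hx : x ∈ Set.Icc (0 : ℝ) 1) : 0 ≤ bern n k x := by
  have : 0 ≤ 1 - x := sub_nonneg.2 hx.2
  have := hx.1
  unfold bern
  positivity

lemma sum_bern (n : ℕ) (x : ℝ) : ∑ k : Fin (n + 1), bern n k x = 1 := by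
  have binomial := (add_pow x (1 - x) n).symm
  rw [add_sub_cancel, one_pow] at binomial
  rw [Fin.sum_univ_eq_sum_range (fun k => bern n k x), ← binomial]
  exact sum_congr rfl fun k _ => by unfold bern; ring

lemma sum_sq_sub_mul_bern {n : ℕ} (hn : n ≠ 0) {x : ℝ} (hx : x ∈ Set.Icc (0 : ℝ) 1) :
    ∑ k : Fin (n + 1), (x - (k : ℝ) / n) ^ 2 * bern n k x = x * (1 - x) / n := by
  simpa [bern, bernstein_apply, bernstein.z] using bernstein.variance hn ⟨x, hx⟩

lemma Fintype.sum_prod_mul_apply_eq_of_sum_eq_one {ι α R : Type*} [Fintype ι] [DecidableEq ι]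
    [Fintype α] [CommSemiring R] {g : ι → α → R} (hg : ∀ i, ∑ a, g i a = 1) (j : ι)
    (h : α → R) : ∑ k : ι → α, (∏ i, g i (k i)) * h (k j) = ∑ a, g j a * h a := by
  calc ∑ k : ι → α, (∏ i, g i (k i)) * h (k j)
      = ∑ k : ι → α, ∏ i, g i (k i) * (if i = j then h (k i) else 1) := by
        simp only [Finset.prod_mul_distrib, Finset.prod_ite_eq', Finset.mem_univ, if_true]
    _ = ∏ i, ∑ a, g i a * (if i = j then h a else 1) :=
        (Fintype.prod_sum fun i a => g i a * if i = j then h a else 1).symm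
    _ = ∑ a, g j a * h a := by
        rw [Finset.prod_eq_single j (fun i _ hi => by simpa [if_neg hi] using hg i) (by simp)]
        simp only [if_true]

lemma Real.sum_mul_sqrt_le_sqrt_sum_mul {ι : Type*} {s : Finset ι} {w a : ι → ℝ}
    (hw : ∀ i ∈ s, 0 ≤ w i) (hw₁ : ∑ i ∈ s, w i = 1) (ha : ∀ i ∈ s, 0 ≤ a i) :
    ∑ i ∈ s, w i * √(a i) ≤ √(∑ i ∈ s, w i * a i) :=
  strictConcaveOn_sqrt.concaveOn.le_map_sum hw hw₁ ha

lemma abs_sub_sum_mul_le {ι : Type*} {s : Finset ι} {w v : ι → ℝ} (hw : ∀ i ∈ s, 0 ≤ w i)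
    (hw₁ : ∑ i ∈ s, w i = 1) (c : ℝ) :
    |c - ∑ i ∈ s, v i * w i| ≤ ∑ i ∈ s, |c - v i| * w i := by
  have : c - ∑ i ∈ s, v i * w i = ∑ i ∈ s, (c - v i) * w i := by
    simp only [sub_mul, sum_sub_distrib, ← mul_sum, hw₁, mul_one]
  rw [this]
  refine (abs_sum_le_sum_abs _ _).trans_eq (sum_congr rfl fun i hi => ?_)
  rw [abs_mul, abs_of_nonneg (hw i hi)]

section BernsteinWeights

variable {ι : Type*} {n : ℕ}

noncomputable def gridPoint (n : ℕ) (k : ι → Fin (n + 1)) : ι → ℝ :=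
  fun j => ((k j : ℕ) : ℝ) / n

lemma gridPoint_mem_Icc (k : ι → Fin (n + 1)) (j : ι) : gridPoint n k j ∈ Set.Icc (0 : ℝ) 1 :=
  ⟨by unfold gridPoint; positivity,
    div_le_one_of_le₀ (by exact_mod_cast (k j).is_le) n.cast_nonneg⟩

variable [Fintype ι]

noncomputable def bernWeight (n : ℕ) (x : ι → ℝ) (k : ι → Fin (n + 1)) : ℝ :=
  ∏ j, bern n (k j) (x j)

lemma bernWeight_nonneg {x : ι → ℝ} (hx : ∀ j, x j ∈ Set.Icc (0 : ℝ) 1) (k : ι → Fin (n + 1)) :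
    0 ≤ bernWeight n x k :=
  prod_nonneg fun j _ => bern_nonneg (hx j)

variable [DecidableEq ι]

lemma sum_bernWeight (n : ℕ) (x : ι → ℝ) : ∑ k, bernWeight n x k = 1 :=
  (Fintype.prod_sum fun j (m : Fin (n + 1)) => bern n m (x j)).symm.trans
    (prod_eq_one fun j _ => sum_bern n (x j))

lemma sum_bernWeight_mul_sq_sub (hn : n ≠ 0) {x : ι → ℝ} (hx : ∀ j, x j ∈ Set.Icc (0 : ℝ) 1)
    (j : ι) : ∑ k, bernWeight n x k * (x j - gridPoint n k j) ^ 2 = x j * (1 - x j) / n := by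
  rw [← sum_sq_sub_mul_bern hn (hx j)]
  refine (Fintype.sum_prod_mul_apply_eq_of_sum_eq_one (fun i => sum_bern n (x i)) j
    fun m : Fin (n + 1) => (x j - (m : ℝ) / n) ^ 2).trans (sum_congr rfl fun m _ => mul_comm _ _)

lemma sum_bernWeight_mul_sum_sq_sub (hn : n ≠ 0) {x : ι → ℝ}
    (hx : ∀ j, x j ∈ Set.Icc (0 : ℝ) 1) :
    ∑ k, bernWeight n x k * ∑ j, (x j - gridPoint n k j) ^ 2 = ∑ j, x j * (1 - x j) / n := by
  simp only [mul_sum]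
  rw [Finset.sum_comm]
  exact sum_congr rfl fun j _ => sum_bernWeight_mul_sq_sub hn hx j

lemma sum_bernWeight_mul_sqrt_le (hn : n ≠ 0) {x : ι → ℝ} (hx : ∀ j, x j ∈ Set.Icc (0 : ℝ) 1) :
    ∑ k, bernWeight n x k * √(∑ j, (x j - gridPoint n k j) ^ 2) ≤
      √(Fintype.card ι / n) / 2 := by
  have variance_le : ∑ j, x j * (1 - x j) / n ≤ Fintype.card ι / n / 4 :=
    calc ∑ j, x j * (1 - x j) / n ≤ ∑ _j : ι, (1 / 4 : ℝ) / n :=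
          sum_le_sum fun j _ => by gcongr; nlinarith [sq_nonneg (x j - 1 / 2)]
      _ = Fintype.card ι / n / 4 := by rw [sum_const, card_univ, nsmul_eq_mul]; ring
  calc ∑ k, bernWeight n x k * √(∑ j, (x j - gridPoint n k j) ^ 2)
      ≤ √(∑ k, bernWeight n x k * ∑ j, (x j - gridPoint n k j) ^ 2) :=
        Real.sum_mul_sqrt_le_sqrt_sum_mul (fun k _ => bernWeight_nonneg hx k)
          (sum_bernWeight n x) fun k _ => sum_nonneg fun j _ => sq_nonneg _
    _ ≤ √(Fintype.card ι / n / 4) := by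
        rw [sum_bernWeight_mul_sum_sq_sub hn hx]
        exact Real.sqrt_le_sqrt variance_le
    _ = √(Fintype.card ι / n) / 2 := by
        rw [Real.sqrt_div' _ (by norm_num : (0 : ℝ) ≤ 4), show (4 : ℝ) = 2 ^ 2 by norm_num,
          Real.sqrt_sq (by norm_num)]

end BernsteinWeights

theorem bernstein_lipschitz_approx_general (d n : ℕ) (hn : 1 ≤ n)
    (f : (Fin d → ℝ) → ℝ) (L : ℝ) (hL : 0 ≤ L)
    (hf : ∀ x y : Fin d → ℝ, (∀ j, x j ∈ Set.Icc (0 : ℝ) 1) →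
      (∀ j, y j ∈ Set.Icc (0 : ℝ) 1) →
      |f x - f y| ≤ L * Real.sqrt (∑ j, (x j - y j) ^ 2))
    (x : Fin d → ℝ) (hx : ∀ j, x j ∈ Set.Icc (0 : ℝ) 1) :
    |f x - bernOp d n f x| ≤ L / 2 * Real.sqrt ((d : ℝ) / n) := by
  have hw : ∀ k ∈ univ, 0 ≤ bernWeight n x k := fun k _ => bernWeight_nonneg hx k
  calc |f x - bernOp d n f x|
      ≤ ∑ k, |f x - f (gridPoint n k)| * bernWeight n x k :=
        abs_sub_sum_mul_le hw (sum_bernWeight n x) (f x)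
    _ ≤ ∑ k, L * √(∑ j, (x j - gridPoint n k j) ^ 2) * bernWeight n x k :=
        sum_le_sum fun k hk =>
          mul_le_mul_of_nonneg_right (hf x _ hx (gridPoint_mem_Icc k)) (hw k hk)
    _ = L * ∑ k, bernWeight n x k * √(∑ j, (x j - gridPoint n k j) ^ 2) := by
        rw [mul_sum]
        exact sum_congr rfl fun k _ => by ring
    _ ≤ L * (√(Fintype.card (Fin d) / n) / 2) :=
        mul_le_mul_of_nonneg_left (sum_bernWeight_mul_sqrt_le (by omega) hx) hL
    _ = L / 2 * √(d / n) := by rw [Fintype.card_fin]; ring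

theorem bernstein_lipschitz_approx (d n : ℕ) (hd : 1 ≤ d) (hn : 1 ≤ n)
    (f : (Fin d → ℝ) → ℝ) (L : ℝ) (hL : 0 ≤ L)
    (hf : ∀ x y : Fin d → ℝ, (∀ j, x j ∈ Set.Icc (0 : ℝ) 1) →
      (∀ j, y j ∈ Set.Icc (0 : ℝ) 1) →
      |f x - f y| ≤ L * Real.sqrt (∑ j, (x j - y j) ^ 2))
    (x : Fin d → ℝ) (hx : ∀ j, x j ∈ Set.Icc (0 : ℝ) 1) :
    |f x - bernOp d n f x| ≤ L / 2 * Real.sqrt ((d : ℝ) / n) :=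
  bernstein_lipschitz_approx_general d n hn f L hL hf x hx
end

section
/- Let n ≥ 1 and x ∈ [0,1], and use the conventions p_{n,-1} = p_{n,n+1} = 0. Then the first-order variation of the Bernstein basis satisfies ∑_{k=-1}^{n} |p_{n,k+1}(x) - p_{n,k}(x)| ≤ min(2, ((n+1)x(1-x))^{-1/2}). -/
/-- The Bernstein polynomial `p_{n,k}(x) = C(n,k) x^k (1-x)^{n-k}` with integer index,
using the convention `p_{n,k} = 0` for `k < 0` or `k > n`. -/
noncomputable def bernZ (n : ℕ) (k : ℤ) (x : ℝ) : ℝ :=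
  if 0 ≤ k then (n.choose k.toNat : ℝ) * x ^ k.toNat * (1 - x) ^ (n - k.toNat) else 0

noncomputable def bernAux (m j : ℕ) (x : ℝ) : ℝ :=
  (m.choose j : ℝ) * x ^ j * (1 - x) ^ (m - j)

lemma bernAux_nonneg (m j : ℕ) {x : ℝ} (h0 : 0 ≤ x) (h1 : x ≤ 1) : 0 ≤ bernAux m j x := by
  have : 0 ≤ 1 - x := by linarith
  unfold bernAux; positivity

lemma bernZ_natCast (n j : ℕ) (x : ℝ) : bernZ n (j : ℤ) x = bernAux n j x := by
  simp [bernZ, bernAux]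

lemma sumBernAux (m : ℕ) (x : ℝ) : ∑ j ∈ Finset.range (m + 1), bernAux m j x = 1 := by
  have := congrArg (Polynomial.eval x) (bernsteinPolynomial.sum ℝ m)
  simpa [Polynomial.eval_finset_sum, bernsteinPolynomial, bernAux] using this

lemma varBernAux (m : ℕ) (x : ℝ) :
    ∑ j ∈ Finset.range (m + 1), ((m : ℝ) * x - j) ^ 2 * bernAux m j x = m * x * (1 - x) := by
  have := congrArg (Polynomial.eval x) (bernsteinPolynomial.variance ℝ m)
  simpa [Polynomial.eval_finset_sum, bernsteinPolynomial, bernAux, mul_assoc] using this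

lemma bernKey (n j : ℕ) (hj : j ≤ n + 1) (x : ℝ) :
    x * (1 - x) * (n + 1) * (bernZ n ((j : ℤ) - 1) x - bernZ n (j : ℤ) x)
      = ((j : ℝ) - (n + 1) * x) * bernAux (n + 1) j x := by
  rcases j with _ | i
  · simp only [Nat.cast_zero, zero_sub, bernZ, bernAux]
    norm_num [pow_succ]
    ring
  · have e1 : bernZ n ((↑(i + 1) : ℤ) - 1) x = bernAux n i x := by
      have h1 : ((i : ℤ) + 1) - 1 = (i : ℤ) := by ring
      push_cast; rw [h1]; exact_mod_cast bernZ_natCast n i x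
    rw [e1, bernZ_natCast]
    have hin : i ≤ n := by omega
    have hc1 : ((n : ℝ) + 1) * (n.choose i : ℝ)
        = ((n + 1).choose (i + 1) : ℝ) * ((i : ℝ) + 1) := by
      exact_mod_cast congrArg (Nat.cast : ℕ → ℝ) (Nat.add_one_mul_choose_eq n i)
    have hc2 : (((n + 1).choose (i + 1) : ℕ) : ℝ)
        = (n.choose i : ℝ) + (n.choose (i + 1) : ℝ) := by
      rw [Nat.choose_succ_succ]; push_cast; ring
    rcases eq_or_lt_of_le hin with rfl | hlt
    · simp only [bernAux, Nat.choose_self, Nat.sub_self, Nat.choose_succ_self_right,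
        Nat.choose_succ_self, Nat.cast_zero, zero_mul, mul_zero]
      push_cast
      ring
    · obtain ⟨d, hd⟩ : ∃ d, n - (i + 1) = d := ⟨_, rfl⟩
      have hd3 : n - i = d + 1 := by omega
      have hd4 : n + 1 - (i + 1) = d + 1 := by omega
      simp only [bernAux, hd, hd3, hd4]
      push_cast
      linear_combination (x ^ (i + 1) * (1 - x) ^ (d + 1)) * hc1
        + (((n : ℝ) + 1) * x ^ (i + 2) * (1 - x) ^ (d + 1)) * hc2

lemma icc_map (n : ℕ) :
    Finset.Icc (-1 : ℤ) (n : ℤ)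
      = Finset.map ⟨fun j : ℕ => (j : ℤ) - 1, fun a b h => by simp only [sub_left_inj, Int.natCast_inj] at h; exact h⟩
          (Finset.range (n + 2)) := by
  ext k
  simp only [Finset.mem_Icc, Finset.mem_map, Finset.mem_range, Function.Embedding.coeFn_mk]
  constructor
  · rintro ⟨h1, h2⟩
    exact ⟨(k + 1).toNat, by omega, by show (((k + 1).toNat : ℕ) : ℤ) - 1 = k; omega⟩
  · rintro ⟨j, hj, rfl⟩
    show -1 ≤ (j : ℤ) - 1 ∧ (j : ℤ) - 1 ≤ n
    omega

theorem bernstein_first_order_variation (n : ℕ) (hn : 1 ≤ n) (x : ℝ)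
    (hx : x ∈ Set.Icc (0 : ℝ) 1) :
    (x ∈ Set.Ioo (0 : ℝ) 1 →
      ∑ k ∈ Finset.Icc (-1 : ℤ) (n : ℤ), |bernZ n k x - bernZ n (k + 1) x|
        ≤ min 2 (1 / Real.sqrt ((n + 1) * x * (1 - x)))) ∧
    ∑ k ∈ Finset.Icc (-1 : ℤ) (n : ℤ), |bernZ n k x - bernZ n (k + 1) x| ≤ 2 := by
  obtain ⟨hx0, hx1⟩ := hx
  -- reindex the sum
  have hre : (∑ k ∈ Finset.Icc (-1 : ℤ) (n : ℤ), |bernZ n k x - bernZ n (k + 1) x|)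
      = ∑ j ∈ Finset.range (n + 2), |bernZ n ((j : ℤ) - 1) x - bernZ n (j : ℤ) x| := by
    rw [icc_map n, Finset.sum_map]
    refine Finset.sum_congr rfl fun j _ => ?_
    have : ((j : ℤ) - 1) + 1 = (j : ℤ) := by ring
    show |bernZ n ((j : ℤ) - 1) x - bernZ n (((j : ℤ) - 1) + 1) x| = _
    simp [this]
  -- the two relevant probability sums are 1
  have hsum1 : ∑ j ∈ Finset.range (n + 2), bernZ n ((j : ℤ) - 1) x = 1 := by
    rw [Finset.sum_range_succ']
    have h0 : bernZ n ((0 : ℕ) - 1 : ℤ) x = 0 := by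
      norm_num [bernZ]
    rw [h0, add_zero]
    have : ∀ i ∈ Finset.range (n + 1), bernZ n ((↑(i + 1) : ℤ) - 1) x = bernAux n i x := by
      intro i _
      have h1 : (↑(i + 1) : ℤ) - 1 = (i : ℤ) := by push_cast; ring
      rw [h1, bernZ_natCast]
    rw [Finset.sum_congr rfl this, sumBernAux]
  have hsum2 : ∑ j ∈ Finset.range (n + 2), bernZ n (j : ℤ) x = 1 := by
    have : ∀ j ∈ Finset.range (n + 2), bernZ n (j : ℤ) x = bernAux n j x :=
      fun j _ => bernZ_natCast n j x
    rw [Finset.sum_congr rfl this, Finset.sum_range_succ, sumBernAux]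
    simp [bernAux, Nat.choose_succ_self]
  have hZnn : ∀ k : ℤ, 0 ≤ bernZ n k x := by
    intro k
    unfold bernZ
    split
    · have : 0 ≤ 1 - x := by linarith
      positivity
    · exact le_rfl
  -- part 2 : bound by 2
  have h2 : (∑ k ∈ Finset.Icc (-1 : ℤ) (n : ℤ), |bernZ n k x - bernZ n (k + 1) x|) ≤ 2 := by
    rw [hre]
    calc ∑ j ∈ Finset.range (n + 2), |bernZ n ((j : ℤ) - 1) x - bernZ n (j : ℤ) x|
        ≤ ∑ j ∈ Finset.range (n + 2), (bernZ n ((j : ℤ) - 1) x + bernZ n (j : ℤ) x) := by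
          refine Finset.sum_le_sum fun j _ => ?_
          have ha := hZnn ((j : ℤ) - 1)
          have hb := hZnn (j : ℤ)
          rw [abs_sub_le_iff]
          constructor <;> linarith
      _ = 2 := by rw [Finset.sum_add_distrib, hsum1, hsum2]; norm_num
  refine ⟨fun hIoo => ?_, h2⟩
  obtain ⟨hx0', hx1'⟩ := hIoo
  refine le_min h2 ?_
  set c : ℝ := ((n : ℝ) + 1) * x * (1 - x) with hc_def
  have hc : 0 < c := by
    have : (0:ℝ) < (n:ℝ) + 1 := by positivity
    have h1x : 0 < 1 - x := by linarith
    positivity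
  set S := ∑ j ∈ Finset.range (n + 2), |bernZ n ((j : ℤ) - 1) x - bernZ n (j : ℤ) x| with hS
  have hSnn : 0 ≤ S := Finset.sum_nonneg fun j _ => abs_nonneg _
  -- Cauchy-Schwarz bound
  have hcs : c * S ≤ Real.sqrt c := by
    have hfac : 0 ≤ x * (1 - x) * ((n : ℝ) + 1) := by nlinarith
    have step1 : c * S = ∑ j ∈ Finset.range (n + 2),
        |(j : ℝ) - ((n : ℝ) + 1) * x| * bernAux (n + 1) j x := by
      rw [hS, Finset.mul_sum]
      refine Finset.sum_congr rfl fun j hj => ?_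
      have hj' : j ≤ n + 1 := by
        have := Finset.mem_range.mp hj; omega
      have hk := bernKey n j hj' x
      have : c * |bernZ n ((j : ℤ) - 1) x - bernZ n (j : ℤ) x|
          = |x * (1 - x) * ((n : ℝ) + 1) * (bernZ n ((j : ℤ) - 1) x - bernZ n (j : ℤ) x)| := by
        rw [abs_mul, abs_of_nonneg hfac, hc_def]; ring
      rw [this, hk, abs_mul, abs_of_nonneg (bernAux_nonneg (n + 1) j hx0 hx1)]
    rw [step1]
    have key : ∑ j ∈ Finset.range (n + 2),
        |(j : ℝ) - ((n : ℝ) + 1) * x| * bernAux (n + 1) j x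
        ≤ Real.sqrt (∑ j ∈ Finset.range (n + 2),
            ((j : ℝ) - ((n : ℝ) + 1) * x) ^ 2 * bernAux (n + 1) j x)
          * Real.sqrt (∑ j ∈ Finset.range (n + 2), bernAux (n + 1) j x) := by
      have := Real.sum_mul_le_sqrt_mul_sqrt (Finset.range (n + 2))
        (fun j => |(j : ℝ) - ((n : ℝ) + 1) * x| * Real.sqrt (bernAux (n + 1) j x))
        (fun j => Real.sqrt (bernAux (n + 1) j x))
      have e1 : ∀ j ∈ Finset.range (n + 2),
          (|(j : ℝ) - ((n : ℝ) + 1) * x| * Real.sqrt (bernAux (n + 1) j x))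
            * Real.sqrt (bernAux (n + 1) j x)
          = |(j : ℝ) - ((n : ℝ) + 1) * x| * bernAux (n + 1) j x := by
        intro j _
        rw [mul_assoc, Real.mul_self_sqrt (bernAux_nonneg (n + 1) j hx0 hx1)]
      have e2 : ∀ j ∈ Finset.range (n + 2),
          (|(j : ℝ) - ((n : ℝ) + 1) * x| * Real.sqrt (bernAux (n + 1) j x)) ^ 2
          = ((j : ℝ) - ((n : ℝ) + 1) * x) ^ 2 * bernAux (n + 1) j x := by
        intro j _
        rw [mul_pow, sq_abs, Real.sq_sqrt (bernAux_nonneg (n + 1) j hx0 hx1)]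
      have e3 : ∀ j ∈ Finset.range (n + 2),
          (Real.sqrt (bernAux (n + 1) j x)) ^ 2 = bernAux (n + 1) j x := by
        intro j _
        exact Real.sq_sqrt (bernAux_nonneg (n + 1) j hx0 hx1)
      rw [Finset.sum_congr rfl e1, Finset.sum_congr rfl e2, Finset.sum_congr rfl e3] at this
      exact this
    have hvar : ∑ j ∈ Finset.range (n + 2),
        ((j : ℝ) - ((n : ℝ) + 1) * x) ^ 2 * bernAux (n + 1) j x = c := by
      have := varBernAux (n + 1) x
      push_cast at this
      rw [hc_def]
      rw [← this]
      refine Finset.sum_congr rfl fun j _ => ?_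
      ring_nf
    rw [hvar, sumBernAux, Real.sqrt_one, mul_one] at key
    exact key
  have hsq : 0 < Real.sqrt c := Real.sqrt_pos.2 hc
  rw [le_div_iff₀ hsq]
  nlinarith [Real.mul_self_sqrt hc.le, hcs, hsq]
end

section
/- For every x ∈ [0,1], the Takagi-type series identity x(1-x) = ∑_{k=1}^∞ φ^{∘k}(x)/4^k holds, where φ(x) = 2x for 0 ≤ x ≤ 1/2 and φ(x) = 2 − 2x for 1/2 ≤ x ≤ 1, and φ^{∘k} denotes k-fold composition of φ. -/
/-- The tent map `φ(x) = 2x` on `[0,1/2]` and `φ(x) = 2-2x` on `[1/2,1]`. -/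
noncomputable def tent (x : ℝ) : ℝ := min (2 * x) (2 - 2 * x)

lemma tent_mem {x : ℝ} (hx : x ∈ Set.Icc (0 : ℝ) 1) : tent x ∈ Set.Icc (0 : ℝ) 1 := by
  obtain ⟨h0, h1⟩ := hx
  unfold tent
  rcases le_total (2 * x) (2 - 2 * x) with h | h
  · rw [min_eq_left h]
    constructor <;> nlinarith
  · rw [min_eq_right h]
    constructor <;> nlinarith

lemma tent_iter_mem {x : ℝ} (hx : x ∈ Set.Icc (0 : ℝ) 1) (n : ℕ) :
    tent^[n] x ∈ Set.Icc (0 : ℝ) 1 := by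
  induction n with
  | zero => simpa using hx
  | succ n ih => rw [Function.iterate_succ_apply']; exact tent_mem ih

lemma tent_key (x : ℝ) : x * (1 - x) = tent x / 4 + tent x * (1 - tent x) / 4 := by
  unfold tent
  rcases le_total (2 * x) (2 - 2 * x) with h | h
  · rw [min_eq_left h]; ring
  · rw [min_eq_right h]; ring

lemma tent_partial (x : ℝ) (n : ℕ) :
    x * (1 - x) = (∑ k ∈ Finset.range n, tent^[k + 1] x / 4 ^ (k + 1))
      + tent^[n] x * (1 - tent^[n] x) / 4 ^ n := by
  induction n with
  | zero => simp
  | succ n ih =>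
    rw [Finset.sum_range_succ, ih, Function.iterate_succ_apply']
    have h : tent^[n] x * (1 - tent^[n] x) / 4 ^ n
        = tent (tent^[n] x) / 4 ^ (n+1) + tent (tent^[n] x) * (1 - tent (tent^[n] x)) / 4 ^ (n+1) := by
      rw [tent_key (tent^[n] x), pow_succ]; ring
    rw [h]; ring

theorem takagi_series_identity (x : ℝ) (hx : x ∈ Set.Icc (0 : ℝ) 1) :
    HasSum (fun k : ℕ => tent^[k + 1] x / 4 ^ (k + 1)) (x * (1 - x)) := by
  have hsum : Summable (fun k : ℕ => tent^[k + 1] x / 4 ^ (k + 1)) := by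
    apply Summable.of_nonneg_of_le
      (fun k => div_nonneg (tent_iter_mem hx (k+1)).1 (by positivity))
      (fun k => ?_)
      (((summable_geometric_of_lt_one (by norm_num) (by norm_num : (1:ℝ)/4 < 1))).mul_left (1/4))
    have h1 : tent^[k+1] x ≤ 1 := (tent_iter_mem hx (k+1)).2
    have h2 : (1:ℝ)/4 * (1/4)^k = 1/4^(k+1) := by rw [one_div_pow, pow_succ]; ring
    rw [h2]
    gcongr
  rw [hsum.hasSum_iff_tendsto_nat]
  have key : ∀ n, ∑ k ∈ Finset.range n, tent^[k + 1] x / 4 ^ (k + 1)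
      = x * (1 - x) - tent^[n] x * (1 - tent^[n] x) / 4 ^ n := by
    intro n; rw [tent_partial x n]; ring
  simp only [key]
  have h0 : Filter.Tendsto (fun n : ℕ => tent^[n] x * (1 - tent^[n] x) / 4 ^ n)
      Filter.atTop (nhds 0) := by
    apply squeeze_zero (fun n => ?_) (fun n => ?_)
      (tendsto_pow_atTop_nhds_zero_of_lt_one (by norm_num : (0:ℝ) ≤ 1/4) (by norm_num))
    · have := tent_iter_mem hx n
      apply div_nonneg (by nlinarith [this.1, this.2]) (by positivity)
    · have hm := tent_iter_mem hx n
      have h1 : tent^[n] x * (1 - tent^[n] x) ≤ 1 := by nlinarith [hm.1, hm.2]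
      rw [one_div_pow]
      gcongr
  have := (tendsto_const_nhds (x := x * (1-x)) (f := Filter.atTop (α := ℕ))).sub h0
  simpa using this
end
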